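/- arXiv:2601.14977 — 4 statements merged into one kernel-verified Lean document; each statement's English description precedes it below -/
import Mathlib

section
/- Let G be a finite simple graph on n vertices with graph Laplacian L, let 0<α<1 and t≥0. Then the subdiffusive distance 𝒟_{α,t}(v,w) is real and nonnegative for all vertices v,w, and there exists an embedding x: V → ℝⁿ such that 𝒟_{α,t}(v,w) = ‖x(v) − x(w)‖₂² for all v,w ∈ V. -/
open Matrix

/-- The Mittag-Leffler matrix function `E_α(M) = ∑_{k=0}^∞ M^k/Γ(αk+1)`, defined entrywise. -/
noncomputable def mittagLefflerMatrix {n : ℕ} (α : ℝ) (M : Matrix (Fin n) (Fin n) ℝ) :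
    Matrix (Fin n) (Fin n) ℝ :=
  Matrix.of fun i j => ∑' k : ℕ, ((M ^ k) i j) / Real.Gamma (α * k + 1)

/-- The subdiffusive distance
`𝒟_{α,t}(v,w) = (E_α(−t^αL))_{vv} + (E_α(−t^αL))_{ww} − 2(E_α(−t^αL))_{vw}`. -/
noncomputable def subdiffDist {n : ℕ} (G : SimpleGraph (Fin n)) [DecidableRel G.Adj]
    (α t : ℝ) (v w : Fin n) : ℝ :=
  mittagLefflerMatrix α (-(t ^ α) • G.lapMatrix ℝ) v v +
    mittagLefflerMatrix α (-(t ^ α) • G.lapMatrix ℝ) w w -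
    2 * mittagLefflerMatrix α (-(t ^ α) • G.lapMatrix ℝ) v w

/-!
Diagonalising `L = U diag(λ) Uᵀ` gives `E_α(-sL) = U diag(E_α(-sλₘ)) Uᵀ`, hence
`𝒟_{α,t}(v,w) = ∑ₘ E_α(-sλₘ) (U v m - U w m)²` with `s = t^α` and `λₘ ≥ 0`, and
`x v = (√(E_α(-sλₘ)) U v m)ₘ` is the embedding once `E_α(-x) ≥ 0` for all `x ≥ 0`.

For this scalar inequality, Gauss's product `C(β+n, n) / n^β` decreases to `1/Γ(β+1)`, so by
dominated convergence `E_α(-x)` is the limit of `W_n(x/n^α)`, where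
`W_n(c) = ∑ⱼ (-c)ʲ C(αj+n, n)`. Chu–Vandermonde yields the Grünwald–Letnikov recursion
`(1+c) W_n = C(n-α, n) - ∑_{k=1}^n C(k-α-1, k) W_{n-k}`, and as `C(k-α-1, k) ≤ 0` for `k ≥ 1`,
strong induction gives `W_n(c) ≥ 0` for `0 ≤ c < 1`.
-/

open Finset Filter Topology

namespace Ring

section BinomialRing

variable {R : Type*} [CommRing R] [BinomialRing R]

lemma choose_add_self_natCast (j n : ℕ) : choose ((j : R) + n) n = (j + n).choose n := by
  rw [← choose_natCast]; push_cast; rfl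

lemma choose_add_self_eq_neg_one_pow_mul (r : R) (k : ℕ) :
    choose (r + k) k = (-1) ^ k * choose (-(r + 1)) k := by
  rw [choose_neg, Units.smul_def, zsmul_eq_mul, Int.cast_negOnePow_natCast, ← mul_assoc,
    ← mul_pow]
  simp [add_sub_right_comm]

lemma sum_range_choose_add_self_mul (r s : R) (n : ℕ) :
    ∑ k ∈ range (n + 1), choose (r + k) k * choose (s + (n - k : ℕ)) (n - k) =
      choose (r + s + 1 + n) n := by
  rw [choose_add_self_eq_neg_one_pow_mul, show -(r + s + 1 + 1) = -(r + 1) + -(s + 1) by ring,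
    add_choose_eq _ (Commute.all _ _), Nat.sum_antidiagonal_eq_sum_range_succ_mk, mul_sum]
  refine sum_congr rfl fun k hk => ?_
  rw [choose_add_self_eq_neg_one_pow_mul, choose_add_self_eq_neg_one_pow_mul,
    ← pow_sub_mul_pow (-1 : R) (Nat.le_of_lt_succ (mem_range.mp hk))]
  ring

end BinomialRing

section Field

variable {K : Type*} [Field K] [CharZero K]

lemma choose_eq_prod_sub_div_factorial (a : K) (n : ℕ) :
    choose a n = (∏ i ∈ range n, (a - i)) / n.factorial := by
  rw [choose_eq_smul, ← Polynomial.aeval_eq_smeval, Polynomial.aeval_def,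
    ← Polynomial.eval_map, descPochhammer_map, descPochhammer_eval_eq_prod_range, smul_eq_mul,
    inv_mul_eq_div]

lemma choose_add_self_eq_prod (β : K) (n : ℕ) :
    choose (β + n) n = ∏ i ∈ range n, (β + (i + 1)) / (i + 1) := by
  rw [choose_eq_prod_sub_div_factorial, prod_div_distrib, ← prod_range_add_one_eq_factorial,
    ← prod_range_reflect]
  push_cast
  congr 1
  refine prod_congr rfl fun i hi => ?_
  have := mem_range.mp hi
  rw [Nat.cast_sub (by omega), Nat.cast_sub (by omega)]
  push_cast
  ring

lemma choose_add_self_succ (β : K) (n : ℕ) :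
    choose (β + (n + 1 : ℕ)) (n + 1) = choose (β + n) n * ((β + (n + 1)) / (n + 1)) := by
  rw [choose_add_self_eq_prod, choose_add_self_eq_prod, prod_range_succ]

end Field

section LinearOrderedField

variable {K : Type*} [Field K] [LinearOrder K] [IsStrictOrderedRing K]

lemma choose_add_self_nonneg {β : K} (hβ : -1 ≤ β) (n : ℕ) : 0 ≤ choose (β + n) n := by
  rw [choose_add_self_eq_prod]
  exact prod_nonneg fun i _ =>
    div_nonneg (by linarith [(i.cast_nonneg : (0 : K) ≤ i)]) (by positivity)

lemma choose_add_self_le {β γ : K} (hβ : -1 ≤ β) (hβγ : β ≤ γ) (n : ℕ) :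
    choose (β + n) n ≤ choose (γ + n) n := by
  simp only [choose_add_self_eq_prod]
  gcongr with i
  exact fun i _ => div_nonneg (by linarith [(i.cast_nonneg : (0 : K) ≤ i)]) (by positivity)

lemma choose_neg_sub_one_add_self_nonpos {α : K} (hα0 : 0 ≤ α) (hα1 : α ≤ 1) (k : ℕ) :
    choose (-α - 1 + (k + 1 : ℕ)) (k + 1) ≤ 0 := by
  rw [choose_add_self_eq_prod, prod_range_succ']
  refine mul_nonpos_of_nonneg_of_nonpos (prod_nonneg fun i _ => div_nonneg ?_ (by positivity)) ?_
  · push_cast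
    linarith [(i.cast_nonneg : (0 : K) ≤ i)]
  · simpa using hα0

end LinearOrderedField

end Ring

noncomputable def altChooseSeries (α c : ℝ) (n : ℕ) : ℝ :=
  ∑' j : ℕ, (-c) ^ j * Ring.choose (α * j + n) n

section altChooseSeries

variable {α c : ℝ}

lemma summable_neg_pow_mul_choose (hα0 : 0 ≤ α) (hα1 : α ≤ 1) (hc : |c| < 1) (n : ℕ) :
    Summable fun j : ℕ => (-c) ^ j * Ring.choose (α * j + n) n := by
  refine (summable_choose_mul_geometric_of_norm_lt_one n (r := |c|) (by simpa)).of_norm_bounded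
    fun j => ?_
  have hj : (0 : ℝ) ≤ j := j.cast_nonneg
  rw [norm_mul, norm_pow, norm_neg, Real.norm_eq_abs, Real.norm_eq_abs,
    abs_of_nonneg (Ring.choose_add_self_nonneg (β := α * j) (by nlinarith) n), mul_comm,
    ← Ring.choose_add_self_natCast]
  gcongr
  exact Ring.choose_add_self_le (by nlinarith) (by nlinarith) n

lemma sum_range_choose_mul_altChooseSeries (hα0 : 0 ≤ α) (hα1 : α ≤ 1) (hc : |c| < 1) (n : ℕ) :
    ∑ k ∈ range (n + 1), Ring.choose (-α - 1 + k) k * altChooseSeries α c (n - k) =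
      Ring.choose (-α + n) n - c * altChooseSeries α c n := by
  have hshift : ∀ j : ℕ, (-c) ^ (j + 1) * Ring.choose (α * (j + 1 : ℕ) + -α + n) n =
      -c * ((-c) ^ j * Ring.choose (α * j + n) n) := fun j => by
    rw [show α * ((j + 1 : ℕ) : ℝ) + -α = α * j by push_cast; ring, pow_succ]
    ring
  have hsum := summable_neg_pow_mul_choose hα0 hα1 hc
  calc ∑ k ∈ range (n + 1), Ring.choose (-α - 1 + k) k * altChooseSeries α c (n - k)
      = ∑' j : ℕ, ∑ k ∈ range (n + 1),
          Ring.choose (-α - 1 + k) k * ((-c) ^ j * Ring.choose (α * j + (n - k : ℕ)) (n - k)) := by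
        simp only [altChooseSeries, ← tsum_mul_left]
        exact (Summable.tsum_finsetSum fun k _ => (hsum (n - k)).mul_left _).symm
    _ = ∑' j : ℕ, (-c) ^ j * Ring.choose (α * j + -α + n) n := by
        refine tsum_congr fun j => ?_
        rw [show α * j + -α = -α - 1 + α * j + 1 by ring, ← Ring.sum_range_choose_add_self_mul,
          mul_sum]
        exact sum_congr rfl fun k _ => by ring
    _ = Ring.choose (-α + n) n - c * altChooseSeries α c n := by
        rw [Summable.tsum_eq_zero_add ((summable_nat_add_iff 1).mp
            (by simpa only [hshift] using (hsum n).mul_left (-c))),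
          tsum_congr hshift, tsum_mul_left, altChooseSeries]
        simp only [pow_zero, one_mul, CharP.cast_eq_zero, mul_zero, zero_add]
        ring

theorem altChooseSeries_nonneg (hα0 : 0 ≤ α) (hα1 : α ≤ 1) (hc0 : 0 ≤ c) (hc1 : c < 1) (n : ℕ) :
    0 ≤ altChooseSeries α c n := by
  induction n using Nat.strong_induction_on with
  | _ n ih =>
    have hrec := sum_range_choose_mul_altChooseSeries hα0 hα1 (abs_lt.mpr ⟨by linarith, hc1⟩) n
    rw [sum_range_succ', Nat.cast_zero, add_zero, Ring.choose_zero_right, one_mul,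
      Nat.sub_zero] at hrec
    have hforcing : 0 ≤ Ring.choose (-α + n) n := Ring.choose_add_self_nonneg (by linarith) n
    have hmemory : ∑ k ∈ range n, Ring.choose (-α - 1 + (k + 1 : ℕ)) (k + 1) *
        altChooseSeries α c (n - (k + 1)) ≤ 0 :=
      sum_nonpos fun k hk => mul_nonpos_of_nonpos_of_nonneg
        (Ring.choose_neg_sub_one_add_self_nonpos hα0 hα1 k)
        (ih _ (by have := mem_range.mp hk; omega))
    have hscaled : 0 ≤ (1 + c) * altChooseSeries α c n := by linarith
    exact (mul_nonneg_iff_of_pos_left (by linarith)).mp hscaled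

end altChooseSeries

lemma Real.one_add_mul_one_sub_inv_le_rpow {x β : ℝ} (hx : 0 < x) (hβ : 0 ≤ β) :
    1 + β * (1 - x⁻¹) ≤ x ^ β := by
  rw [Real.rpow_def_of_pos hx]
  calc 1 + β * (1 - x⁻¹) ≤ Real.log x * β + 1 := by
        nlinarith [Real.one_sub_inv_le_log_of_pos hx]
    _ ≤ Real.exp (Real.log x * β) := Real.add_one_le_exp _

noncomputable def invGammaApprox (β : ℝ) (n : ℕ) : ℝ :=
  Ring.choose (β + (n + 1 : ℕ)) (n + 1) / ((n + 1 : ℕ) : ℝ) ^ β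

section invGammaApprox

variable {β : ℝ}

lemma invGammaApprox_nonneg (hβ : -1 ≤ β) (n : ℕ) : 0 ≤ invGammaApprox β n :=
  div_nonneg (Ring.choose_add_self_nonneg hβ _) (by positivity)

lemma antitone_invGammaApprox (hβ : 0 ≤ β) : Antitone (invGammaApprox β) := by
  refine antitone_nat_of_succ_le fun n => ?_
  have hn : (0 : ℝ) < (n + 1 : ℕ) := by positivity
  have hratio : (β + ((n + 1 : ℕ) + 1)) / ((n + 1 : ℕ) + 1) * ((n + 1 : ℕ) : ℝ) ^ β ≤
      ((n + 1 + 1 : ℕ) : ℝ) ^ β := by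
    rw [← le_div_iff₀ (by positivity), ← Real.div_rpow (by positivity) hn.le]
    refine le_trans (le_of_eq ?_) (Real.one_add_mul_one_sub_inv_le_rpow (by positivity) hβ)
    field_simp
    push_cast
    ring
  unfold invGammaApprox
  rw [Ring.choose_add_self_succ, div_le_div_iff₀ (by positivity) (by positivity), mul_assoc]
  exact mul_le_mul_of_nonneg_left hratio (Ring.choose_add_self_nonneg (by linarith) _)

lemma invGammaApprox_eq_inv_GammaSeq_mul (hβ : -1 < β) (n : ℕ) :
    invGammaApprox β n =
      (Real.GammaSeq (β + 1) (n + 1))⁻¹ * ((n + 1 : ℕ) / ((n + 1 : ℕ) + (β + 1))) := by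
  have hpos : ∀ i : ℕ, 0 < β + 1 + i := fun i => by linarith [(i.cast_nonneg : (0:ℝ) ≤ i)]
  have hn : (0 : ℝ) < (n + 1 : ℕ) := by positivity
  have hfact : ∏ i ∈ range (n + 1), ((i : ℝ) + 1) = (n + 1).factorial := by
    rw [← prod_range_add_one_eq_factorial]; push_cast; rfl
  rw [invGammaApprox, Real.GammaSeq, Ring.choose_add_self_eq_prod, prod_div_distrib, hfact,
    Real.rpow_add_one hn.ne', prod_range_succ _ (n + 1)]
  have hQ : ∏ i ∈ range (n + 1), (β + ((i : ℝ) + 1)) = ∏ i ∈ range (n + 1), (β + 1 + i) :=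
    prod_congr rfl fun i _ => by ring
  have hlast : 0 < ((n + 1 : ℕ) : ℝ) + (β + 1) := by linarith [hpos (n + 1)]
  have hprod := prod_pos fun i (_ : i ∈ range (n + 1)) => hpos i
  rw [hQ]
  push_cast at *
  field_simp
  ring

lemma tendsto_invGammaApprox (hβ : -1 < β) :
    Tendsto (invGammaApprox β) atTop (𝓝 (Real.Gamma (β + 1))⁻¹) := by
  have hΓ : Real.Gamma (β + 1) ≠ 0 := (Real.Gamma_pos_of_pos (by linarith)).ne'
  have hGammaSeq :=
    ((tendsto_add_atTop_iff_nat 1).mpr (Real.GammaSeq_tendsto_Gamma (β + 1))).inv₀ hΓ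
  have hratio := (tendsto_add_atTop_iff_nat 1).mpr (tendsto_natCast_div_add_atTop (β + 1))
  rw [← mul_one (Real.Gamma (β + 1))⁻¹]
  exact (hGammaSeq.mul hratio).congr fun n => (invGammaApprox_eq_inv_GammaSeq_mul hβ n).symm

lemma inv_Gamma_le_invGammaApprox (hβ : 0 ≤ β) (n : ℕ) :
    (Real.Gamma (β + 1))⁻¹ ≤ invGammaApprox β n :=
  (antitone_invGammaApprox hβ).le_of_tendsto (tendsto_invGammaApprox (by linarith)) n

end invGammaApprox

noncomputable def mittagLeffler (α z : ℝ) : ℝ :=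
  ∑' k : ℕ, z ^ k / Real.Gamma (α * k + 1)

section mittagLeffler

variable {α : ℝ}

lemma pow_mul_invGammaApprox (y : ℝ) (n j : ℕ) :
    y ^ j * invGammaApprox (α * j) n =
      (y / ((n + 1 : ℕ) : ℝ) ^ α) ^ j * Ring.choose (α * j + (n + 1 : ℕ)) (n + 1) := by
  rw [invGammaApprox, Real.rpow_mul (by positivity), Real.rpow_natCast, div_pow]
  ring

lemma norm_pow_mul_invGammaApprox_le (hα0 : 0 ≤ α) (hα1 : α ≤ 1) (z : ℝ) {n₀ n : ℕ}
    (hn : n₀ ≤ n) (j : ℕ) :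
    ‖z ^ j * invGammaApprox (α * j) n‖ ≤
      (j + (n₀ + 1)).choose (n₀ + 1) * (|z| / ((n₀ + 1 : ℕ) : ℝ) ^ α) ^ j := by
  have hj : (0 : ℝ) ≤ j := j.cast_nonneg
  have hαj : 0 ≤ α * j := by positivity
  calc ‖z ^ j * invGammaApprox (α * j) n‖ = |z| ^ j * invGammaApprox (α * j) n := by
        rw [norm_mul, norm_pow, Real.norm_eq_abs, Real.norm_eq_abs,
          abs_of_nonneg (invGammaApprox_nonneg (by linarith) n)]
    _ ≤ |z| ^ j * invGammaApprox (α * j) n₀ := by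
        gcongr
        exact antitone_invGammaApprox hαj hn
    _ ≤ _ := by
        rw [pow_mul_invGammaApprox, mul_comm, ← Ring.choose_add_self_natCast]
        gcongr
        exact Ring.choose_add_self_le (by linarith) (by nlinarith) _

lemma exists_lt_natCast_add_one_rpow (hα : 0 < α) (x : ℝ) :
    ∃ n : ℕ, x < ((n + 1 : ℕ) : ℝ) ^ α :=
  (((tendsto_rpow_atTop hα).comp (tendsto_natCast_atTop_atTop.comp
    (tendsto_add_atTop_nat 1))).eventually_gt_atTop x).exists

lemma summable_choose_mul_div_rpow_pow {x : ℝ} (hx : 0 ≤ x) {n : ℕ}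
    (hxn : x < ((n + 1 : ℕ) : ℝ) ^ α) :
    Summable fun j : ℕ => ((j + (n + 1)).choose (n + 1) : ℝ) * (x / ((n + 1 : ℕ) : ℝ) ^ α) ^ j := by
  have hpos : 0 < ((n + 1 : ℕ) : ℝ) ^ α := hx.trans_lt hxn
  refine summable_choose_mul_geometric_of_norm_lt_one _ ?_
  rw [Real.norm_eq_abs, abs_of_nonneg (by positivity), div_lt_one hpos]
  exact hxn

theorem summable_pow_div_Gamma (hα0 : 0 < α) (hα1 : α ≤ 1) (z : ℝ) :
    Summable fun k : ℕ => z ^ k / Real.Gamma (α * k + 1) := by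
  obtain ⟨n₀, hn₀⟩ := exists_lt_natCast_add_one_rpow hα0 |z|
  refine (summable_choose_mul_div_rpow_pow (abs_nonneg z) hn₀).of_norm_bounded fun k => ?_
  have hαk : 0 ≤ α * k := by positivity
  refine le_trans ?_ (norm_pow_mul_invGammaApprox_le hα0.le hα1 z le_rfl k)
  rw [div_eq_mul_inv, norm_mul, norm_mul, norm_inv,
    Real.norm_of_nonneg (Real.Gamma_pos_of_pos (by linarith)).le,
    Real.norm_of_nonneg (invGammaApprox_nonneg (by linarith) n₀)]
  gcongr
  exact inv_Gamma_le_invGammaApprox hαk n₀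

theorem mittagLeffler_neg_nonneg (hα0 : 0 < α) (hα1 : α ≤ 1) {x : ℝ} (hx : 0 ≤ x) :
    0 ≤ mittagLeffler α (-x) := by
  obtain ⟨n₀, hn₀⟩ := exists_lt_natCast_add_one_rpow hα0 x
  have hlim : Tendsto (fun n => ∑' j : ℕ, (-x) ^ j * invGammaApprox (α * j) n) atTop
      (𝓝 (mittagLeffler α (-x))) := by
    simp only [mittagLeffler, div_eq_mul_inv]
    refine tendsto_tsum_of_dominated_convergence (summable_choose_mul_div_rpow_pow hx hn₀)
      (fun j => (tendsto_invGammaApprox (neg_one_lt_zero.trans_le (by positivity))).const_mul _) ?_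
    filter_upwards [eventually_ge_atTop n₀] with n hn j
    simpa only [abs_neg, abs_of_nonneg hx] using
      norm_pow_mul_invGammaApprox_le hα0.le hα1 (-x) hn j
  refine ge_of_tendsto hlim ?_
  filter_upwards [eventually_ge_atTop n₀] with n hn
  have hxn : x < ((n + 1 : ℕ) : ℝ) ^ α :=
    hn₀.trans_le (Real.rpow_le_rpow (by positivity) (by exact_mod_cast Nat.succ_le_succ hn) hα0.le)
  have hpos : 0 < ((n + 1 : ℕ) : ℝ) ^ α := hx.trans_lt hxn
  simp only [pow_mul_invGammaApprox, neg_div]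
  exact altChooseSeries_nonneg hα0.le hα1 (div_nonneg hx hpos.le) ((div_lt_one hpos).mpr hxn) _

end mittagLeffler

lemma Matrix.IsHermitian.smul_pow_apply {ι : Type*} [Fintype ι] [DecidableEq ι]
    {A : Matrix ι ι ℝ} (hA : A.IsHermitian) (c : ℝ) (k : ℕ) (i j : ι) :
    ((c • A) ^ k) i j = ∑ m, hA.eigenvectorUnitary.1 i m * hA.eigenvectorUnitary.1 j m *
      (c * hA.eigenvalues m) ^ k := by
  have hspec : c • A = Unitary.conjStarAlgAut ℝ _ hA.eigenvectorUnitary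
      (diagonal fun m => c * hA.eigenvalues m) := by
    conv_lhs => rw [hA.spectral_theorem]
    rw [← map_smul, ← diagonal_smul]
    rfl
  rw [hspec, ← map_pow, diagonal_pow, Unitary.conjStarAlgAut_apply, mul_apply]
  refine sum_congr rfl fun m _ => ?_
  rw [mul_diagonal, Pi.pow_apply, star_apply, star_trivial]
  ring

lemma mittagLefflerMatrix_smul_apply {n : ℕ} {A : Matrix (Fin n) (Fin n) ℝ} (hA : A.IsHermitian)
    {α : ℝ} (c : ℝ)
    (hsum : ∀ m, Summable fun k : ℕ => (c * hA.eigenvalues m) ^ k / Real.Gamma (α * k + 1))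
    (i j : Fin n) :
    mittagLefflerMatrix α (c • A) i j = ∑ m, hA.eigenvectorUnitary.1 i m *
      hA.eigenvectorUnitary.1 j m * mittagLeffler α (c * hA.eigenvalues m) := by
  simp only [mittagLefflerMatrix, of_apply, hA.smul_pow_apply, sum_div, mittagLeffler,
    ← tsum_mul_left, mul_div_assoc]
  exact Summable.tsum_finsetSum fun m _ => (hsum m).mul_left _

lemma exists_euclideanSpace_sq_dist_eq_sum {ι κ : Type*} [Fintype κ] (u : ι → κ → ℝ)
    {e : κ → ℝ} (he : ∀ m, 0 ≤ e m) :
    ∃ x : ι → EuclideanSpace ℝ κ, ∀ v w, ‖x v - x w‖ ^ 2 = ∑ m, e m * (u v m - u w m) ^ 2 := by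
  refine ⟨fun v => WithLp.toLp 2 fun m => √(e m) * u v m, fun v w => ?_⟩
  rw [EuclideanSpace.norm_sq_eq]
  refine sum_congr rfl fun m _ => ?_
  rw [PiLp.sub_apply, Real.norm_eq_abs, sq_abs, ← mul_sub, mul_pow, Real.sq_sqrt (he m)]

theorem exists_euclidean_embedding_mittagLefflerMatrix {n : ℕ} {α : ℝ} (hα0 : 0 < α) (hα1 : α ≤ 1)
    {L : Matrix (Fin n) (Fin n) ℝ} (hL : L.PosSemidef) {s : ℝ} (hs : 0 ≤ s) :
    ∃ x : Fin n → EuclideanSpace ℝ (Fin n), ∀ v w,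
      mittagLefflerMatrix α (-s • L) v v + mittagLefflerMatrix α (-s • L) w w -
        2 * mittagLefflerMatrix α (-s • L) v w = ‖x v - x w‖ ^ 2 := by
  have hM := mittagLefflerMatrix_smul_apply hL.isHermitian (-s)
    (fun m => summable_pow_div_Gamma hα0 hα1 _)
  have hE : ∀ m, 0 ≤ mittagLeffler α (-s * hL.isHermitian.eigenvalues m) := fun m => by
    rw [neg_mul]
    exact mittagLeffler_neg_nonneg hα0 hα1 (mul_nonneg hs (hL.eigenvalues_nonneg m))
  obtain ⟨x, hx⟩ := exists_euclideanSpace_sq_dist_eq_sum hL.isHermitian.eigenvectorUnitary.1 hE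
  refine ⟨x, fun v w => ?_⟩
  rw [hx, hM, hM, hM, mul_sum, ← sum_add_distrib, ← sum_sub_distrib]
  exact sum_congr rfl fun m _ => by ring

/-- The subdiffusive distance is nonnegative and is a squared Euclidean distance: there is an
embedding `x : V → ℝⁿ` with `𝒟_{α,t}(v,w) = ‖x(v) − x(w)‖₂²`. -/
theorem subdiffDist_nonneg_and_euclidean_embedding
    (n : ℕ) (G : SimpleGraph (Fin n)) [DecidableRel G.Adj]
    (α : ℝ) (hα0 : 0 < α) (hα1 : α < 1) (t : ℝ) (ht : 0 ≤ t) :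
    (∀ v w : Fin n, 0 ≤ subdiffDist G α t v w) ∧
    ∃ x : Fin n → EuclideanSpace ℝ (Fin n),
      ∀ v w : Fin n, subdiffDist G α t v w = ‖x v - x w‖ ^ 2 := by
  obtain ⟨x, hx⟩ := exists_euclidean_embedding_mittagLefflerMatrix hα0 hα1.le
    (G.posSemidef_lapMatrix ℝ) (Real.rpow_nonneg ht α)
  exact ⟨fun v w => (sq_nonneg _).trans_eq (hx v w).symm, x, hx⟩
end

section
/- Let G be a finite simple graph with adjacency matrix A and graph Laplacian L, and let i≠j be vertices with i reachable from j, and set d = d(i,j) (the graph distance). Then (L^d)_{ij} = (−1)^d · (A^d)_{ij}, where (A^d)_{ij} counts the number of walks of length d from i to j (equivalently, the number of shortest walks). -/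
open Matrix

private lemma adjPow_eq_zero_of_lt_dist {n : ℕ} (G : SimpleGraph (Fin n)) [DecidableRel G.Adj]
    {k : ℕ} {i j : Fin n} (h : ∀ p : G.Walk i j, p.length ≠ k) :
    (G.adjMatrix ℝ ^ k) i j = 0 := by
  rw [SimpleGraph.adjMatrix_pow_apply_eq_card_walk, SimpleGraph.card_set_walk_length_eq]
  norm_cast
  rw [Finset.card_eq_zero, Finset.eq_empty_iff_forall_notMem]
  exact fun p hp => h p (SimpleGraph.mem_finsetWalkLength_iff.mp hp)

private lemma lapPow_key {n : ℕ} (G : SimpleGraph (Fin n)) [DecidableRel G.Adj]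
    (k : ℕ) : ∀ i j : Fin n, k ≤ G.dist i j →
    (G.lapMatrix ℝ ^ k) i j = (-1 : ℝ) ^ k * (G.adjMatrix ℝ ^ k) i j := by
  induction k with
  | zero => simp
  | succ k ih =>
    intro i j hk
    have hreach : G.Reachable i j := by
      by_contra hr
      rw [SimpleGraph.dist_eq_zero_of_not_reachable hr] at hk
      omega
    have hAk : (G.adjMatrix ℝ ^ k) i j = 0 := by
      apply adjPow_eq_zero_of_lt_dist
      intro p hp
      have := SimpleGraph.dist_le p
      omega
    have hLk : (G.lapMatrix ℝ ^ k) i j = 0 := by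
      rw [ih i j (by omega), hAk, mul_zero]
    rw [pow_succ' (G.lapMatrix ℝ) k, pow_succ' (G.adjMatrix ℝ) k, Matrix.mul_apply,
      Matrix.mul_apply]
    have hstep : ∀ m : Fin n, (G.lapMatrix ℝ) i m * (G.lapMatrix ℝ ^ k) m j
        = (if m = i then (G.degree i : ℝ) * (G.lapMatrix ℝ ^ k) i j else 0)
          - (-1 : ℝ) ^ k * ((G.adjMatrix ℝ) i m * (G.adjMatrix ℝ ^ k) m j) := by
      intro m
      by_cases him : m = i
      · subst him
        simp [SimpleGraph.lapMatrix, SimpleGraph.degMatrix, Matrix.sub_apply,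
          Matrix.diagonal_apply_eq]
      · have hL : (G.lapMatrix ℝ) i m = - (G.adjMatrix ℝ) i m := by
          simp [SimpleGraph.lapMatrix, SimpleGraph.degMatrix, Matrix.sub_apply,
            Matrix.diagonal_apply_ne' _ him]
        rw [hL]
        by_cases hm : G.Adj i m
        · have hrm : G.Reachable m j := (G.adj_symm hm).toWalk.reachable.trans hreach
          have hdm : k ≤ G.dist m j := by
            obtain ⟨p, hp⟩ := hrm.exists_walk_length_eq_dist
            have := SimpleGraph.dist_le (SimpleGraph.Walk.cons hm p)
            simp only [SimpleGraph.Walk.length_cons] at this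
            omega
          rw [ih m j hdm]
          simp [him]
        · simp [him, hm]
    rw [Finset.sum_congr rfl (fun m _ => hstep m), Finset.sum_sub_distrib,
      Finset.sum_ite_eq' Finset.univ i, ← Finset.mul_sum]
    simp only [Finset.mem_univ, if_true, hLk, mul_zero, zero_sub]
    ring
/-- At the graph distance `d = d(i,j)` (for `i ≠ j`), the `(i,j)` entry of `L^d` equals
`(−1)^d (A^d)_{ij}`, where `(A^d)_{ij}` counts the number of walks of length `d` from `i`
to `j`. -/
theorem lapMatrix_pow_dist_apply
    (n : ℕ) (G : SimpleGraph (Fin n)) [DecidableRel G.Adj]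
    (i j : Fin n) (hij : i ≠ j) (hreach : G.Reachable i j) :
    (G.lapMatrix ℝ ^ G.dist i j) i j =
      (-1 : ℝ) ^ G.dist i j * (G.adjMatrix ℝ ^ G.dist i j) i j ∧
    (G.adjMatrix ℝ ^ G.dist i j) i j = ((G.finsetWalkLength (G.dist i j) i j).card : ℝ) := by
  refine ⟨lapPow_key G _ i j le_rfl, ?_⟩
  rw [SimpleGraph.adjMatrix_pow_apply_eq_card_walk, SimpleGraph.card_set_walk_length_eq]
end

section
/- Let G be a finite simple graph with adjacency matrix A and graph Laplacian L, let 0<α<1, and let i≠j be vertices with i reachable from j; set d = d(i,j). Then, as t→0⁺, (E_α(−t^α L))_{ij} = (t^{α d}/Γ(α d + 1))·(A^d)_{ij} + O(t^{α(d+1)}); that is, the function t ↦ (E_α(−t^α L))_{ij} − (t^{α d}/Γ(α d + 1))·(A^d)_{ij} is O(t^{α(d+1)}) as t tends to 0 from the right. In particular (E_α(−t^α L))_{ij} = O(t^{α d}). -/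
open Matrix Asymptotics Filter

open Topology

/-! For `s = t ^ α`, the entry `E_α(-t^α L)_{ij}` is the power series
`∑ₖ ((-L)^k)_{ij} / Γ(αk + 1) · s^k`, which has positive radius of convergence because
`Γ ≥ 1/2` on `[1, ∞)` and the entries of `(-L)^k` grow at most geometrically; so it is its partial
sum of degree `d` plus `O(s^(d+1))`. The matrix `-L` agrees with `A` off the diagonal and both
vanish off the edges of `G`, so `((-L)^k)_{ij} = (A^k)_{ij}` for `k ≤ d = d(i,j)`, and this
vanishes for `k < d`: the partial sum is the single term `(A^d)_{ij} s^d / Γ(αd + 1)`. -/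

open FormalMultilinearSeries in
theorem isBigO_tsum_mul_pow_sub_sum_range_of_norm_le {𝕜 : Type*} [NontriviallyNormedField 𝕜]
    [CompleteSpace 𝕜] {c : ℕ → 𝕜} {K R : ℝ} (hc : ∀ k, ‖c k‖ ≤ K * R ^ k) (N : ℕ) :
    (fun x : 𝕜 => ∑' k, c k * x ^ k - ∑ k ∈ Finset.range N, c k * x ^ k)
      =O[𝓝 0] fun x => x ^ N := by
  set p := ofScalars 𝕜 c
  have hr : 0 < p.radius := by
    refine lt_of_lt_of_le (ENNReal.coe_pos.mpr (by positivity))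
      (p.le_radius_of_bound (r := (‖R‖₊ + 1)⁻¹) ‖K‖ fun k => ?_)
    have hck : ‖c k‖ ≤ ‖K‖ * ‖R‖ ^ k := by
      simpa [norm_mul, norm_pow] using (hc k).trans (Real.le_norm_self _)
    calc ‖p k‖ * (((‖R‖₊ + 1)⁻¹ : NNReal) : ℝ) ^ k ≤ ‖K‖ * (‖R‖ / (‖R‖ + 1)) ^ k := by
          rw [ofScalars_norm, div_eq_mul_inv, mul_pow, ← mul_assoc]; push_cast; gcongr
      _ ≤ ‖K‖ := mul_le_of_le_one_right (norm_nonneg K)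
          (pow_le_one₀ (by positivity) ((div_le_one (by positivity)).mpr (by linarith)))
  have := (p.hasFPowerSeriesOnBall hr).hasFPowerSeriesAt.isBigO_sub_partialSum_pow N
  simp only [zero_add, FormalMultilinearSeries.sum, partialSum, p, ofScalars_apply_eq, smul_eq_mul,
    ← norm_pow] at this
  exact isBigO_norm_right.mp this

attribute [local instance] Matrix.seminormedAddCommGroup in
theorem Matrix.norm_pow_apply_le {ι R : Type*} [Fintype ι] [DecidableEq ι] [SeminormedRing R]
    [NormOneClass R] (M : Matrix ι ι R) (k : ℕ) (a b : ι) :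
    ‖(M ^ k) a b‖ ≤ (Fintype.card ι * ‖M‖) ^ k := by
  induction k generalizing a with
  | zero => by_cases h : a = b <;> simp [h]
  | succ k ih =>
    calc ‖(M ^ (k + 1)) a b‖ = ‖∑ l, M a l * (M ^ k) l b‖ := by rw [pow_succ', mul_apply]
      _ ≤ ∑ l, ‖M a l‖ * ‖(M ^ k) l b‖ := (norm_sum_le _ _).trans (by gcongr; exact norm_mul_le _ _)
      _ ≤ ∑ _l : ι, ‖M‖ * (Fintype.card ι * ‖M‖) ^ k := by
        gcongr with l; exacts [norm_entry_le_entrywise_sup_norm M, ih l]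
      _ = (Fintype.card ι * ‖M‖) ^ (k + 1) := by
        rw [Finset.sum_const, Finset.card_univ, nsmul_eq_mul, pow_succ']; ring

theorem Real.one_half_le_Gamma {x : ℝ} (hx : 1 ≤ x) : 1 / 2 ≤ Real.Gamma x := by
  have h2 : ∀ {y : ℝ}, 2 ≤ y → 1 ≤ Real.Gamma y := fun hy =>
    Real.Gamma_two ▸ Real.Gamma_strictMonoOn_Ici.monotoneOn Set.self_mem_Ici hy hy
  rcases le_or_gt 2 x with hx2 | hx2
  · linarith [h2 hx2]
  -- on `[1, 2)` use `Γ(x) = Γ(x + 1) / x` with `x < 2`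
  · have : Real.Gamma (x + 1) = x * Real.Gamma x := Real.Gamma_add_one (by linarith)
    nlinarith [h2 (by linarith : 2 ≤ x + 1), Real.Gamma_pos_of_pos (by linarith : 0 < x)]

namespace SimpleGraph

variable {V R : Type*} {G : SimpleGraph V}

theorem Adj.dist_le_dist_add_one {a l : V} (h : G.Adj a l) (b : V) :
    G.dist a b ≤ G.dist l b + 1 := by
  rw [dist_comm, G.dist_comm (u := l)]
  rcases h.symm.diff_dist_adj (u := b) with h' | h' | h' <;> omega

section LocalMatrix

variable (G) in
def IsLocalMatrix [Zero R] (M : Matrix V V R) : Prop :=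
  ∀ ⦃a b⦄, a ≠ b → ¬G.Adj a b → M a b = 0

theorem isLocalMatrix_adjMatrix [Zero R] [One R] [DecidableRel G.Adj] :
    G.IsLocalMatrix (G.adjMatrix R) :=
  fun _ _ _ hadj => by simp [hadj]

variable [Fintype V] [DecidableEq V] [Semiring R] {M N : Matrix V V R}

theorem IsLocalMatrix.pow_apply_eq_zero_of_lt_dist (hM : G.IsLocalMatrix M) {k : ℕ} {a b : V}
    (h : k < G.dist a b) : (M ^ k) a b = 0 := by
  induction k generalizing a with
  | zero => simp [one_apply_ne (dist_ne_zero_iff_ne_and_reachable.mp h.ne').1]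
  | succ k ih =>
    rw [pow_succ', mul_apply]
    refine Finset.sum_eq_zero fun l _ => ?_
    by_cases hla : l = a
    · rw [hla, ih (by omega), mul_zero]
    by_cases hadj : G.Adj a l
    · rw [ih (by have := hadj.dist_le_dist_add_one b; omega), mul_zero]
    · rw [hM (Ne.symm hla) hadj, zero_mul]

theorem IsLocalMatrix.pow_apply_eq_of_le_dist (hN : G.IsLocalMatrix N)
    (hMN : ∀ ⦃a b⦄, a ≠ b → M a b = N a b) {k : ℕ} {a b : V} (h : k ≤ G.dist a b) :
    (M ^ k) a b = (N ^ k) a b := by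
  have hM : G.IsLocalMatrix M := fun a b hab hadj => (hMN hab).trans (hN hab hadj)
  induction k generalizing a with
  | zero => rfl
  | succ k ih =>
    rw [pow_succ', pow_succ', mul_apply, mul_apply]
    refine Finset.sum_congr rfl fun l _ => ?_
    by_cases hla : l = a
    · rw [hla, hM.pow_apply_eq_zero_of_lt_dist (by omega),
        hN.pow_apply_eq_zero_of_lt_dist (by omega), mul_zero, mul_zero]
    · rw [hMN (Ne.symm hla)]
      by_cases hadj : G.Adj a l
      · rw [ih (by have := hadj.dist_le_dist_add_one b; omega)]
      · rw [hN (Ne.symm hla) hadj, zero_mul, zero_mul]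

end LocalMatrix

variable [Fintype V] [DecidableEq V] [DecidableRel G.Adj] [Ring R]

theorem neg_lapMatrix_apply_of_ne {a b : V} (h : a ≠ b) :
    (-G.lapMatrix R) a b = G.adjMatrix R a b := by
  simp [lapMatrix, degMatrix, diagonal_apply_ne _ h]

theorem neg_lapMatrix_pow_apply_of_le_dist {k : ℕ} {a b : V} (h : k ≤ G.dist a b) :
    ((-G.lapMatrix R) ^ k) a b = (G.adjMatrix R ^ k) a b :=
  isLocalMatrix_adjMatrix.pow_apply_eq_of_le_dist (fun _ _ => neg_lapMatrix_apply_of_ne) h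

end SimpleGraph

section MittagLeffler

variable {n : ℕ} {α : ℝ}

theorem mittagLefflerMatrix_smul_apply_s11 (s : ℝ) (M : Matrix (Fin n) (Fin n) ℝ) (i j : Fin n) :
    mittagLefflerMatrix α (s • M) i j = ∑' k : ℕ, (M ^ k) i j / Real.Gamma (α * k + 1) * s ^ k := by
  simp only [mittagLefflerMatrix, of_apply, smul_pow, Matrix.smul_apply, smul_eq_mul]
  congr 1 with k
  ring

attribute [local instance] Matrix.seminormedAddCommGroup in
theorem isBigO_mittagLefflerMatrix_smul_apply_sub (hα : 0 ≤ α) (M : Matrix (Fin n) (Fin n) ℝ)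
    (i j : Fin n) (N : ℕ) :
    (fun s : ℝ => mittagLefflerMatrix α (s • M) i j -
        ∑ k ∈ Finset.range N, (M ^ k) i j / Real.Gamma (α * k + 1) * s ^ k)
      =O[𝓝 0] fun s => s ^ N := by
  have hc (k : ℕ) : ‖(M ^ k) i j / Real.Gamma (α * k + 1)‖ ≤ 2 * (n * ‖M‖) ^ k := by
    have hΓ : 1 / 2 ≤ Real.Gamma (α * k + 1) :=
      Real.one_half_le_Gamma (le_add_of_nonneg_left (by positivity))
    have hX : 0 ≤ ((n : ℝ) * ‖M‖) ^ k := by positivity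
    rw [norm_div, Real.norm_of_nonneg (by linarith : 0 ≤ Real.Gamma (α * k + 1)),
      div_le_iff₀ (by linarith)]
    calc ‖(M ^ k) i j‖ ≤ (n * ‖M‖) ^ k := by simpa using M.norm_pow_apply_le k i j
      _ ≤ 2 * (n * ‖M‖) ^ k * Real.Gamma (α * k + 1) := by nlinarith
  simp_rw [mittagLefflerMatrix_smul_apply_s11]
  exact isBigO_tsum_mul_pow_sub_sum_range_of_norm_le hc N

theorem isBigO_mittagLefflerMatrix_rpow_smul_apply_sub (hα : 0 < α)
    (M : Matrix (Fin n) (Fin n) ℝ) (i j : Fin n) (N : ℕ) :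
    (fun t : ℝ => mittagLefflerMatrix α (t ^ α • M) i j -
        ∑ k ∈ Finset.range N, (M ^ k) i j / Real.Gamma (α * k + 1) * t ^ (α * k))
      =O[𝓝[>] 0] fun t => t ^ (α * N) := by
  have hpow : Tendsto (fun t : ℝ => t ^ α) (𝓝[>] 0) (𝓝 0) := by
    simpa [Real.zero_rpow hα.ne'] using
      (Real.continuousAt_rpow_const 0 α (Or.inr hα.le)).tendsto.mono_left nhdsWithin_le_nhds
  refine ((isBigO_mittagLefflerMatrix_smul_apply_sub hα.le M i j N).comp_tendsto hpow).congr'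
    ?_ ?_
  all_goals filter_upwards [self_mem_nhdsWithin] with t (ht : 0 < t)
  all_goals simp [Real.rpow_mul ht.le]

end MittagLeffler

theorem mittagLeffler_heat_kernel_shortest_path_dominance_general
    (n : ℕ) (G : SimpleGraph (Fin n)) [DecidableRel G.Adj]
    (α : ℝ) (hα0 : 0 < α)
    (i j : Fin n) :
    (fun t : ℝ => mittagLefflerMatrix α (-(t ^ α) • G.lapMatrix ℝ) i j -
        t ^ (α * G.dist i j) / Real.Gamma (α * G.dist i j + 1) *
          (G.adjMatrix ℝ ^ G.dist i j) i j)
      =O[nhdsWithin 0 (Set.Ioi 0)] (fun t : ℝ => t ^ (α * (G.dist i j + 1))) ∧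
    (fun t : ℝ => mittagLefflerMatrix α (-(t ^ α) • G.lapMatrix ℝ) i j)
      =O[nhdsWithin 0 (Set.Ioi 0)] (fun t : ℝ => t ^ (α * G.dist i j)) := by
  set d := G.dist i j
  have hexpand (N : ℕ) :=
    isBigO_mittagLefflerMatrix_rpow_smul_apply_sub hα0 (-G.lapMatrix ℝ) i j N
  simp only [smul_neg, ← neg_smul] at hexpand
  have hlower (t : ℝ) : ∑ k ∈ Finset.range d,
      ((-G.lapMatrix ℝ) ^ k) i j / Real.Gamma (α * k + 1) * t ^ (α * k) = 0 :=
    Finset.sum_eq_zero fun k hk => by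
      have hk : k < d := Finset.mem_range.mp hk
      rw [G.neg_lapMatrix_pow_apply_of_le_dist hk.le,
        G.isLocalMatrix_adjMatrix.pow_apply_eq_zero_of_lt_dist hk, zero_div, zero_mul]
  have htop : ((-G.lapMatrix ℝ) ^ d) i j = (G.adjMatrix ℝ ^ d) i j :=
    G.neg_lapMatrix_pow_apply_of_le_dist le_rfl
  constructor
  · have h := hexpand (d + 1)
    simp only [Finset.sum_range_succ, hlower, zero_add, htop, Nat.cast_add, Nat.cast_one] at h
    exact h.congr_left fun t => by ring
  · simpa only [hlower, sub_zero] using hexpand d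

/-- Shortest-path dominance for the fractional heat kernel as `t → 0⁺`: with `d = d(i,j)`,
`(E_α(−t^α L))_{ij} = (t^{αd}/Γ(αd+1))·(A^d)_{ij} + O(t^{α(d+1)})`, and in particular
`(E_α(−t^α L))_{ij} = O(t^{αd})`. -/
theorem mittagLeffler_heat_kernel_shortest_path_dominance
    (n : ℕ) (G : SimpleGraph (Fin n)) [DecidableRel G.Adj]
    (α : ℝ) (hα0 : 0 < α) (hα1 : α < 1)
    (i j : Fin n) (hij : i ≠ j) (hreach : G.Reachable i j) :
    (fun t : ℝ => mittagLefflerMatrix α (-(t ^ α) • G.lapMatrix ℝ) i j -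
        t ^ (α * G.dist i j) / Real.Gamma (α * G.dist i j + 1) *
          (G.adjMatrix ℝ ^ G.dist i j) i j)
      =O[nhdsWithin 0 (Set.Ioi 0)] (fun t : ℝ => t ^ (α * (G.dist i j + 1))) ∧
    (fun t : ℝ => mittagLefflerMatrix α (-(t ^ α) • G.lapMatrix ℝ) i j)
      =O[nhdsWithin 0 (Set.Ioi 0)] (fun t : ℝ => t ^ (α * G.dist i j)) :=
  mittagLeffler_heat_kernel_shortest_path_dominance_general n G α hα0 i j
end

section
/- Let G be a finite simple graph on n vertices with graph Laplacian L, let 0<α<1, let v be a vertex, and let u(t) = E_α(−t^α L)·e_v, where e_v is the standard basis vector at v. (i) If v has degree at least 1, then there exists ε_v>0 such that t ↦ u_v(t) is strictly decreasing and strictly convex on (0, ε_v). (ii) For every vertex w adjacent to v, there exists ε_w>0 such that t ↦ u_w(t) is strictly increasing and strictly concave on (0, ε_w). -/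
open Matrix

/-! Entrywise, `s ↦ E_α(s • M) i j` is the power series `∑ (M^k) i j / Γ(αk+1) · s^k`, which
has positive radius because `Γ ≥ 1/2` on `[1, ∞)`. Hence `u_w(t) = g(t^α)` for a function `g`
analytic at `0` with `g'(0) = -L w v / Γ(α+1)`: negative at `w = v`, positive at a neighbour `w`.
Writing `s = t^α`, `(g ∘ (·^α))'' = α t^(α-2) ((α-1) g'(s) + α s g''(s))`, and the bracket tends
to `(α-1) g'(0)` as `t → 0⁺`, whose sign is opposite to that of `g'(0)` because `α < 1`. -/

open Filter Topology Set FormalMultilinearSeries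

theorem Real.inv_two_le_Gamma {x : ℝ} (hx : 1 ≤ x) : 2⁻¹ ≤ Real.Gamma x := by
  rcases le_or_gt 2 x with h2 | h2
  · calc 2⁻¹ ≤ Real.Gamma 2 := by rw [Real.Gamma_two]; norm_num
      _ ≤ Real.Gamma x := Real.Gamma_strictMonoOn_Ici.monotoneOn (mem_Ici.2 le_rfl) h2 h2
  · have hx0 : 0 < x := by linarith
    have hΓ : Real.Gamma 2 ≤ Real.Gamma (x + 1) :=
      Real.Gamma_strictMonoOn_Ici.monotoneOn (mem_Ici.2 le_rfl) (mem_Ici.2 (by linarith))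
        (by linarith)
    rw [Real.Gamma_two, Real.Gamma_add_one hx0.ne'] at hΓ
    nlinarith

theorem Matrix.abs_pow_apply_le {ι : Type*} [Fintype ι] [DecidableEq ι] {M : Matrix ι ι ℝ}
    {b : ℝ} (hb : ∀ i j, |M i j| ≤ b) (k : ℕ) (i j : ι) :
    |(M ^ k) i j| ≤ (Fintype.card ι * b) ^ k := by
  induction k generalizing j with
  | zero => by_cases hij : i = j <;> simp [hij]
  | succ k ih =>
    have hb0 : 0 ≤ b := (abs_nonneg _).trans (hb i j)
    calc |(M ^ (k + 1)) i j| ≤ ∑ l, |(M ^ k) i l| * |M l j| := by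
          rw [pow_succ, mul_apply]
          simpa only [abs_mul] using Finset.abs_sum_le_sum_abs (fun l => (M ^ k) i l * M l j) _
      _ ≤ ∑ _l : ι, (Fintype.card ι * b) ^ k * b :=
          Finset.sum_le_sum fun l _ => mul_le_mul (ih l) (hb l j) (abs_nonneg _) (by positivity)
      _ = (Fintype.card ι * b) ^ (k + 1) := by
          rw [Finset.sum_const, Finset.card_univ, nsmul_eq_mul]; ring

theorem FormalMultilinearSeries.ofScalars_radius_pos_of_norm_le {𝕜 : Type*}
    [NontriviallyNormedField 𝕜] {c : ℕ → 𝕜} {C B : ℝ} (hB : 0 < B)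
    (hc : ∀ k, ‖c k‖ ≤ C * B ^ k) : 0 < (ofScalars 𝕜 c).radius := by
  have hle : ((B⁻¹).toNNReal : ENNReal) ≤ (ofScalars 𝕜 c).radius := by
    refine (ofScalars 𝕜 c).le_radius_of_bound C fun k => ?_
    rw [ofScalars_norm, Real.coe_toNNReal _ (by positivity)]
    calc ‖c k‖ * B⁻¹ ^ k ≤ C * B ^ k * B⁻¹ ^ k := by gcongr; exact hc k
      _ = C := by rw [mul_assoc, ← mul_pow, mul_inv_cancel₀ hB.ne', one_pow, mul_one]
  exact lt_of_lt_of_le (by simpa using hB) hle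

noncomputable def mittagLefflerCoeff {n : ℕ} (α : ℝ) (M : Matrix (Fin n) (Fin n) ℝ)
    (i j : Fin n) (k : ℕ) : ℝ :=
  (M ^ k) i j / Real.Gamma (α * k + 1)

theorem mittagLefflerMatrix_smul_apply_s16 {n : ℕ} (α : ℝ) (M : Matrix (Fin n) (Fin n) ℝ)
    (i j : Fin n) (s : ℝ) :
    mittagLefflerMatrix α (s • M) i j = ofScalarsSum (E := ℝ) (mittagLefflerCoeff α M i j) s := by
  rw [ofScalars_sum_eq, mittagLefflerMatrix, of_apply]
  refine tsum_congr fun k => ?_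
  simp only [smul_pow, Matrix.smul_apply, smul_eq_mul, mittagLefflerCoeff]
  ring

theorem radius_ofScalars_mittagLefflerCoeff_pos {n : ℕ} {α : ℝ} (hα : 0 ≤ α)
    (M : Matrix (Fin n) (Fin n) ℝ) (i j : Fin n) :
    0 < (ofScalars ℝ (mittagLefflerCoeff α M i j)).radius := by
  let _ : NormedAddCommGroup (Matrix (Fin n) (Fin n) ℝ) := Matrix.normedAddCommGroup
  set b := ‖M‖ + 1
  have hM : ∀ i j, |M i j| ≤ b := fun i j =>
    (M.norm_entry_le_entrywise_sup_norm (i := i) (j := j)).trans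
      (le_add_of_nonneg_right zero_le_one)
  have hnb : (0 : ℝ) < n * b := mul_pos (by exact_mod_cast i.pos) (by positivity)
  refine ofScalars_radius_pos_of_norm_le (C := 2) hnb fun k => ?_
  have hΓ : 2⁻¹ ≤ Real.Gamma (α * k + 1) := Real.inv_two_le_Gamma (by simp; positivity)
  calc ‖mittagLefflerCoeff α M i j k‖ = |(M ^ k) i j| / Real.Gamma (α * k + 1) := by
        rw [Real.norm_eq_abs, mittagLefflerCoeff, abs_div,
          abs_of_pos (a := Real.Gamma _) (by linarith)]
    _ ≤ (n * b) ^ k / 2⁻¹ :=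
        div_le_div₀ (by positivity) (by simpa using abs_pow_apply_le hM k i j) (by norm_num) hΓ
    _ = 2 * (n * b) ^ k := by ring

theorem hasFPowerSeriesAt_mittagLefflerMatrix_smul_apply {n : ℕ} {α : ℝ} (hα : 0 ≤ α)
    (M : Matrix (Fin n) (Fin n) ℝ) (i j : Fin n) :
    HasFPowerSeriesAt (fun s : ℝ => mittagLefflerMatrix α (s • M) i j)
      (ofScalars ℝ (mittagLefflerCoeff α M i j)) 0 := by
  rw [funext (mittagLefflerMatrix_smul_apply_s16 α M i j)]
  exact ((ofScalars ℝ (mittagLefflerCoeff α M i j)).hasFPowerSeriesOnBall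
    (radius_ofScalars_mittagLefflerCoeff_pos hα M i j)).hasFPowerSeriesAt

section CompRpow

variable {g : ℝ → ℝ} {α t : ℝ}

theorem hasDerivAt_comp_rpow (ht : 0 < t) (hg : DifferentiableAt ℝ g (t ^ α)) :
    HasDerivAt (fun t => g (t ^ α)) (deriv g (t ^ α) * (α * t ^ (α - 1))) t :=
  hg.hasDerivAt.comp t (Real.hasDerivAt_rpow_const (Or.inl ht.ne'))

theorem deriv2_comp_rpow (ht : 0 < t)
    (hg : ∀ᶠ s in 𝓝 (t ^ α), DifferentiableAt ℝ g s)
    (hg' : DifferentiableAt ℝ (deriv g) (t ^ α)) :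
    deriv^[2] (fun t => g (t ^ α)) t =
      α * t ^ (α - 2) * ((α - 1) * deriv g (t ^ α) + α * t ^ α * deriv (deriv g) (t ^ α)) := by
  have hderiv :
      deriv (fun t => g (t ^ α)) =ᶠ[𝓝 t] fun t => deriv g (t ^ α) * (α * t ^ (α - 1)) := by
    have hpos : ∀ᶠ s in 𝓝 t, 0 < s := eventually_gt_nhds ht
    have hrpow : ∀ᶠ s in 𝓝 t, DifferentiableAt ℝ g (s ^ α) :=
      (Real.continuousAt_rpow_const t α (Or.inl ht.ne')).eventually hg
    filter_upwards [hpos, hrpow] with s hs hgs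
    exact (hasDerivAt_comp_rpow hs hgs).deriv
  have hsecond : HasDerivAt (fun t => deriv g (t ^ α) * (α * t ^ (α - 1)))
      (deriv (deriv g) (t ^ α) * (α * t ^ (α - 1)) * (α * t ^ (α - 1)) +
        deriv g (t ^ α) * (α * ((α - 1) * t ^ (α - 1 - 1)))) t :=
    (hasDerivAt_comp_rpow ht hg').mul
      ((Real.hasDerivAt_rpow_const (p := α - 1) (Or.inl ht.ne')).const_mul α)
  rw [Function.iterate_succ_apply, Function.iterate_one, hderiv.deriv_eq, hsecond.deriv]
  have h2 : t ^ (α - 1) * t ^ (α - 1) = t ^ (α - 2) * t ^ α := by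
    rw [← Real.rpow_add ht, ← Real.rpow_add ht]; ring_nf
  have h1 : t ^ (α - 1 - 1) = t ^ (α - 2) := by ring_nf
  rw [h1]
  linear_combination α * α * deriv (deriv g) (t ^ α) * h2

theorem AnalyticAt.exists_strictAntiOn_strictConvexOn_comp_rpow (hg : AnalyticAt ℝ g 0)
    (hg0 : deriv g 0 < 0) (hα0 : 0 < α) (hα1 : α < 1) :
    ∃ ε > 0, StrictAntiOn (fun t => g (t ^ α)) (Ioo 0 ε) ∧
      StrictConvexOn ℝ (Ioo 0 ε) (fun t => g (t ^ α)) := by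
  set Φ : ℝ → ℝ := fun s => (α - 1) * deriv g s + α * s * deriv (deriv g) s
  have hΦ : ContinuousAt Φ 0 := by
    have := hg.deriv.continuousAt; have := hg.deriv.deriv.continuousAt
    fun_prop
  have hΦ0 : 0 < Φ 0 := by simp only [Φ]; nlinarith
  have hnear : ∀ᶠ s in 𝓝 0, AnalyticAt ℝ g s ∧ deriv g s < 0 ∧ 0 < Φ s :=
    hg.eventually_analyticAt.and
      ((hg.deriv.continuousAt.eventually (gt_mem_nhds hg0)).and
        (hΦ.eventually (lt_mem_nhds hΦ0)))
  have hrpow : Tendsto (fun t : ℝ => t ^ α) (𝓝[>] 0) (𝓝 0) := by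
    simpa [Real.zero_rpow hα0.ne'] using
      (Real.continuousAt_rpow_const 0 α (Or.inr hα0.le)).tendsto.mono_left nhdsWithin_le_nhds
  obtain ⟨ε, hε, hsub⟩ := mem_nhdsGT_iff_exists_Ioo_subset.1 (hrpow.eventually hnear)
  have hcont : ContinuousOn (fun t => g (t ^ α)) (Ioo 0 ε) := fun t ht =>
    (hasDerivAt_comp_rpow ht.1 (hsub ht).1.differentiableAt).continuousAt.continuousWithinAt
  refine ⟨ε, hε, strictAntiOn_of_deriv_neg (convex_Ioo 0 ε) hcont fun t ht => ?_,
    strictConvexOn_of_deriv2_pos (convex_Ioo 0 ε) hcont fun t ht => ?_⟩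
  all_goals rw [interior_Ioo] at ht; obtain ⟨hga, hg'neg, hΦpos⟩ := hsub ht
  · rw [(hasDerivAt_comp_rpow ht.1 hga.differentiableAt).deriv]
    exact mul_neg_of_neg_of_pos hg'neg (by have := ht.1; positivity)
  · rw [deriv2_comp_rpow ht.1
      (hga.eventually_analyticAt.mono fun s hs => hs.differentiableAt) hga.deriv.differentiableAt]
    exact mul_pos (by have := ht.1; positivity) hΦpos

theorem AnalyticAt.exists_strictMonoOn_strictConcaveOn_comp_rpow (hg : AnalyticAt ℝ g 0)
    (hg0 : 0 < deriv g 0) (hα0 : 0 < α) (hα1 : α < 1) :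
    ∃ ε > 0, StrictMonoOn (fun t => g (t ^ α)) (Ioo 0 ε) ∧
      StrictConcaveOn ℝ (Ioo 0 ε) (fun t => g (t ^ α)) := by
  obtain ⟨ε, hε, hanti, hconv⟩ :=
    hg.neg.exists_strictAntiOn_strictConvexOn_comp_rpow
      (by rwa [deriv.neg', neg_neg_iff_pos]) hα0 hα1
  exact ⟨ε, hε, fun x hx y hy hxy => neg_lt_neg_iff.1 (hanti hx hy hxy),
    neg_strictConvexOn_iff.1 hconv⟩

end CompRpow

/-- Local convexity/concavity of fractional diffusion `u(t) = E_α(−t^α L) e_v`: at the source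
vertex `v` (of degree ≥ 1) the profile is strictly decreasing and strictly convex on some
`(0, ε_v)`; at each neighbor `w` of `v` it is strictly increasing and strictly concave on some
`(0, ε_w)`. -/
theorem fractional_diffusion_local_convexity_concavity
    (n : ℕ) (G : SimpleGraph (Fin n)) [DecidableRel G.Adj]
    (α : ℝ) (hα0 : 0 < α) (hα1 : α < 1) (v : Fin n) :
    (1 ≤ G.degree v →
      ∃ ε > (0 : ℝ),
        StrictAntiOn
          (fun t : ℝ => (mittagLefflerMatrix α (-(t ^ α) • G.lapMatrix ℝ) *ᵥ
            Pi.single v 1) v) (Set.Ioo 0 ε) ∧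
        StrictConvexOn ℝ (Set.Ioo 0 ε)
          (fun t : ℝ => (mittagLefflerMatrix α (-(t ^ α) • G.lapMatrix ℝ) *ᵥ
            Pi.single v 1) v)) ∧
    (∀ w : Fin n, G.Adj v w →
      ∃ ε > (0 : ℝ),
        StrictMonoOn
          (fun t : ℝ => (mittagLefflerMatrix α (-(t ^ α) • G.lapMatrix ℝ) *ᵥ
            Pi.single v 1) w) (Set.Ioo 0 ε) ∧
        StrictConcaveOn ℝ (Set.Ioo 0 ε)
          (fun t : ℝ => (mittagLefflerMatrix α (-(t ^ α) • G.lapMatrix ℝ) *ᵥ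
            Pi.single v 1) w)) := by
  set L := G.lapMatrix ℝ
  have hu : ∀ w (t : ℝ), (mittagLefflerMatrix α (-(t ^ α) • L) *ᵥ Pi.single v 1) w =
      mittagLefflerMatrix α ((t ^ α) • -L) w v := by
    intro w t
    simp [mulVec_single, neg_smul, smul_neg]
  have hg : ∀ w, HasFPowerSeriesAt (fun s : ℝ => mittagLefflerMatrix α (s • -L) w v)
      (ofScalars ℝ (mittagLefflerCoeff α (-L) w v)) 0 :=
    fun w => hasFPowerSeriesAt_mittagLefflerMatrix_smul_apply hα0.le (-L) w v
  have hg' : ∀ w, deriv (fun s : ℝ => mittagLefflerMatrix α (s • -L) w v) 0 =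
      -L w v / Real.Gamma (α + 1) := by
    intro w
    rw [(hg w).deriv, ofScalars_apply_eq]
    simp [mittagLefflerCoeff]
  have hΓ : 0 < Real.Gamma (α + 1) := Real.Gamma_pos_of_pos (by linarith)
  simp only [hu]
  refine ⟨fun hdeg => (hg v).analyticAt.exists_strictAntiOn_strictConvexOn_comp_rpow ?_ hα0 hα1,
    fun w hvw => (hg w).analyticAt.exists_strictMonoOn_strictConcaveOn_comp_rpow ?_ hα0 hα1⟩
  · have hLvv : L v v = G.degree v := by simp [L, SimpleGraph.lapMatrix, SimpleGraph.degMatrix]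
    rw [hg', hLvv]
    exact div_neg_of_neg_of_pos (by simp; omega) hΓ
  · have hLwv : L w v = -1 := by
      simp [L, SimpleGraph.lapMatrix, SimpleGraph.degMatrix, hvw.symm, hvw.ne']
    rw [hg', hLwv, neg_neg]
    exact div_pos one_pos hΓ
end
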